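/- arXiv:1904.07682 — 2 statements merged into one kernel-verified Lean document; each statement's English description precedes it below -/
import Mathlib

section
/- Let H̃ be a Cayley graph of an abelian group of size k̃ and let H be a (q,δ)-reasonable induced subgraph of H̃ on k ≥ k̃ − (1/4)·log k̃ vertices (for some 0<q<1/2, 0<δ<1). Then every subset S ⊆ V(H) of size |S| ≥ (1−q)·k is a signature of H. -/
universe u v

open Filter

/-- The Cayley graph of an additive abelian group `G` with connection set `Λ`:
distinct vertices `x y : G` are adjacent iff `x - y ∈ Λ` (for `Λ` with `Λ = -Λ`). -/
def cayleyGraph (G : Type u) [AddCommGroup G] (Λ : Set G) : SimpleGraph G where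
  Adj x y := x ≠ y ∧ x - y ∈ Λ ∧ y - x ∈ Λ
  symm := by
    constructor
    rintro x y ⟨h1, h2, h3⟩
    exact ⟨fun e => h1 e.symm, h3, h2⟩
  loopless := by
    constructor
    rintro x ⟨h1, -, -⟩
    exact h1 rfl

/-- `Λ` is a possible outcome of the random procedure: `0 ∉ Λ` and `Λ = -Λ`. -/
def IsSymmetricSubset {G : Type u} [AddCommGroup G] (Λ : Finset G) : Prop :=
  (0 : G) ∉ Λ ∧ ∀ g ∈ Λ, -g ∈ Λ

/-- The number of negation-pairs `{g, -g}` among the elements of `Λ`. -/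
noncomputable def pairCount {G : Type u} [AddCommGroup G] (Λ : Finset G) : ℕ :=
  letI := Classical.decEq G
  (Λ.image fun g => ({g, -g} : Finset G)).card

/-- The probability that the random procedure with parameter `p` (each pair
`{g, -g} ⊆ G \ {0}` is included independently with probability `p`) produces
exactly the symmetric set `Λ`. -/
noncomputable def lambdaWeight {G : Type u} [AddCommGroup G] [Fintype G] (p : ℝ)
    (Λ : Finset G) : ℝ :=
  letI := Classical.decEq G
  p ^ pairCount Λ * (1 - p) ^ (pairCount ((Finset.univ : Finset G).erase 0) - pairCount Λ)

open Classical in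
/-- The probability that the random set `Λ ⊆ G \ {0}` produced by the random procedure
with parameter `p` satisfies the predicate `P`. -/
noncomputable def lambdaProb (G : Type u) [AddCommGroup G] [Fintype G] (p : ℝ)
    (P : Finset G → Prop) : ℝ :=
  ∑ Λ : Finset G, if IsSymmetricSubset Λ ∧ P Λ then lambdaWeight p Λ else 0

/-- `emb(H, Γ)`: the number of graph embeddings of `H` into `Γ`. -/
noncomputable def embCount {α : Type u} {β : Type v} (H : SimpleGraph α)
    (Γ : SimpleGraph β) : ℕ :=
  Nat.card (H ↪g Γ)

/-- `emb(H, n)`: the maximum of `emb(H, Γ)` over all `n`-vertex graphs `Γ`. -/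
noncomputable def embMax {α : Type u} (H : SimpleGraph α) (n : ℕ) : ℕ :=
  sSup {m | ∃ Γ : SimpleGraph (Fin n), embCount H Γ = m}

/-- The number of vertex subsets of `Γ` inducing a copy of `H`. -/
noncomputable def indCount {α : Type u} {β : Type v} (H : SimpleGraph α)
    (Γ : SimpleGraph β) : ℕ :=
  Nat.card {s : Set β // Nonempty ((Γ.induce s) ≃g H)}

/-- `ind(H, n)`: the maximum number of induced copies of `H` in an `n`-vertex graph. -/
noncomputable def indMax {α : Type u} (H : SimpleGraph α) (n : ℕ) : ℕ :=
  sSup {m | ∃ Γ : SimpleGraph (Fin n), indCount H Γ = m}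

/-- `Γ` is a blow-up of `H` with (non-empty) parts `W i`, `i ∈ V(H)`. -/
def IsBlowupWith {α : Type u} {β : Type v} (H : SimpleGraph α) (Γ : SimpleGraph β)
    (W : α → Set β) : Prop :=
  (∀ i, (W i).Nonempty) ∧ (∀ x : β, ∃! i, x ∈ W i) ∧
    ∀ i j, i ≠ j → ∀ x ∈ W i, ∀ y ∈ W j, (Γ.Adj x y ↔ H.Adj i j)

/-- Auxiliary fuelled version of "balanced iterated blow-up". -/
def IsBIBAux {α : Type u} (H : SimpleGraph α) : ℕ → ∀ (β : Type v), SimpleGraph β → Prop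
  | 0, β, _ => Nat.card β < Nat.card α
  | n + 1, β, Γ =>
      Nat.card β < Nat.card α ∨
        ∃ W : α → Set β, IsBlowupWith H Γ W ∧
          (∀ i j, Nat.card (W i) ≤ Nat.card (W j) + 1) ∧
          ∀ i, IsBIBAux H n ↥(W i) (Γ.induce (W i))

/-- `Γ` is a balanced iterated blow-up of `H`: either `|V(Γ)| < |V(H)|`, or `Γ` is a
balanced blow-up of `H` each of whose parts induces a balanced iterated blow-up of `H`. -/
def IsBalancedIterBlowup {α : Type u} {β : Type v} (H : SimpleGraph α)
    (Γ : SimpleGraph β) : Prop :=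
  IsBIBAux H (Nat.card β + 1) β Γ

/-- `φ` is one of the `2k̃` rotations and reflections of a Cayley graph on `G`. -/
def IsRotOrRefl {G : Type u} [AddCommGroup G] (φ : G → G) : Prop :=
  (∃ g : G, ∀ x : G, φ x = x + g) ∨ ∃ g : G, ∀ x : G, φ x = -x + g

/-- A graph is prime if no subset `U` with `2 ≤ |U| < |V(H)|` is such that every vertex
outside `U` is complete to `U` or has no edges to `U`. -/
def IsPrimeGraph {α : Type u} (H : SimpleGraph α) : Prop :=
  ¬ ∃ U : Set α, 2 ≤ Nat.card U ∧ Nat.card U < Nat.card α ∧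
      ∀ x ∉ U, (∀ y ∈ U, H.Adj x y) ∨ ∀ y ∈ U, ¬ H.Adj x y

/-- A signature of `H`: distinct vertices outside `S` have distinct neighbourhoods in `S`. -/
def IsSignature {α : Type u} (H : SimpleGraph α) (S : Set α) : Prop :=
  ∀ v ∉ S, ∀ w ∉ S, v ≠ w → H.neighborSet v ∩ S ≠ H.neighborSet w ∩ S

/-- An `r`-super-signature of `H`. -/
def IsSuperSignature {α : Type u} (H : SimpleGraph α) (r : ℝ) (S : Set α) : Prop :=
  S.Nonempty ∧ ∀ v ∉ S, ∀ w ∉ S, v ≠ w →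
    r * (Nat.card S : ℝ) ≤
      (Nat.card ↥(symmDiff (H.neighborSet v) (H.neighborSet w) ∩ S) : ℝ)

/-- The Cayley graph `cayleyGraph G Λ` is `(q₀, δ₀)`-typical. -/
def IsTypical {G : Type u} [AddCommGroup G] [Fintype G] (Λ : Set G) (q₀ δ₀ : ℝ) : Prop :=
  (∀ v : G,
      q₀ * (Fintype.card G : ℝ) ≤ (Nat.card ((cayleyGraph G Λ).neighborSet v) : ℝ) ∧
        (Nat.card ((cayleyGraph G Λ).neighborSet v) : ℝ) ≤
          (1 - q₀) * (Fintype.card G : ℝ)) ∧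
    (∀ v w : G, v ≠ w →
      q₀ * (Fintype.card G : ℝ) ≤
        (Nat.card {u : G | u ≠ v ∧ u ≠ w ∧
          Xor' ((cayleyGraph G Λ).Adj u v) ((cayleyGraph G Λ).Adj u w)} : ℝ)) ∧
    (¬ ∃ X Y : Set G, Disjoint X Y ∧
      2 * (Fintype.card G : ℝ) ^ ((4 : ℝ) / 5) ≤ (Nat.card X : ℝ) ∧
      2 * (Fintype.card G : ℝ) ^ ((4 : ℝ) / 5) ≤ (Nat.card Y : ℝ) ∧
      ((∀ x ∈ X, ∀ y ∈ Y, (cayleyGraph G Λ).Adj x y) ∨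
        ∀ x ∈ X, ∀ y ∈ Y, ¬ (cayleyGraph G Λ).Adj x y)) ∧
    ∀ (X : Set G) (f : G → G),
      (1 - δ₀) * (Fintype.card G : ℝ) ≤ (Nat.card X : ℝ) →
      Set.InjOn f X →
      (∀ v ∈ X, ∀ w ∈ X, v ≠ w →
        ((cayleyGraph G Λ).Adj (f v) (f w) ↔ (cayleyGraph G Λ).Adj v w)) →
      ∃ φ : G → G, IsRotOrRefl φ ∧ Set.EqOn f φ X

/-- The induced subgraph of the Cayley graph `cayleyGraph G Λ` on the vertex set `K`
is a `(q, δ)`-reasonable induced subgraph. -/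
def IsReasonable {G : Type u} [AddCommGroup G] [Fintype G] (Λ K : Set G) (q δ : ℝ) : Prop :=
  IsPrimeGraph ((cayleyGraph G Λ).induce K) ∧
    (∀ v w : G, v ≠ w →
      q * (Nat.card K : ℝ) ≤
        (Nat.card {u : G | u ∈ K ∧ u ≠ v ∧ u ≠ w ∧
          Xor' ((cayleyGraph G Λ).Adj u v) ((cayleyGraph G Λ).Adj u w)} : ℝ)) ∧
    ∀ (X : Set G) (f : G → G),
      (1 - δ) * (Nat.card K : ℝ) ≤ (Nat.card X : ℝ) →
      Set.InjOn f X →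
      (∀ v ∈ X, ∀ w ∈ X, v ≠ w →
        ((cayleyGraph G Λ).Adj (f v) (f w) ↔ (cayleyGraph G Λ).Adj v w)) →
      ∃ φ : G → G, IsRotOrRefl φ ∧ Set.EqOn f φ X

/-- `E_ℓ(m) = m₁ ⋯ m_ℓ` where `⌈m/ℓ⌉ ≥ m₁ ≥ … ≥ m_ℓ ≥ ⌊m/ℓ⌋` and `m₁ + … + m_ℓ = m`. -/
def Epart (ℓ m : ℕ) : ℕ := (m / ℓ + 1) ^ (m % ℓ) * (m / ℓ) ^ (ℓ - m % ℓ)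

/-- The rotation `y ↦ y + g` of a Cayley graph on `G`. -/
def rotationMap {G : Type u} [AddCommGroup G] (g : G) : G → G := fun y => y + g

/-- The reflection `y ↦ -y + g` of a Cayley graph on `G`. -/
def reflectionMap {G : Type u} [AddCommGroup G] (g : G) : G → G := fun y => -y + g

/-- The family of the `2k̃` rotations and reflections, indexed by `Bool × G`. -/
def rotRefl {G : Type u} [AddCommGroup G] : Bool × G → G → G
  | (false, g) => rotationMap g
  | (true, g) => reflectionMap g

/-!
If two vertices `v, w` outside `S` had the same neighbourhood in `S`, then no vertex of `S`
would distinguish them, so `S`, `{v, w}` and the at least `q k` vertices of `H` distinguishing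
`v` and `w` would be disjoint, giving `(1 - q) k + 2 + q k ≤ k`.
-/

namespace SimpleGraph

variable {α β : Type*}

def distinguishers (H : SimpleGraph α) (v w : α) : Set α :=
  {u | u ≠ v ∧ u ≠ w ∧ Xor' (H.Adj u v) (H.Adj u w)}

theorem disjoint_distinguishers_of_neighborSet_inter_eq (H : SimpleGraph α) {S : Set α}
    {v w : α} (h : H.neighborSet v ∩ S = H.neighborSet w ∩ S) :
    Disjoint (H.distinguishers v w) S := by
  rw [Set.disjoint_left]
  rintro u ⟨-, -, hxor⟩ huS
  have hvw := Set.ext_iff.mp h u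
  simp only [Set.mem_inter_iff, mem_neighborSet, huS, and_true] at hvw
  rw [H.adj_comm u v, H.adj_comm u w] at hxor
  exact (xor_iff_not_iff _ _).mp hxor hvw

theorem card_add_two_add_card_distinguishers_le [Finite α] (H : SimpleGraph α) {S : Set α}
    {v w : α} (hv : v ∉ S) (hw : w ∉ S) (hvw : v ≠ w)
    (h : H.neighborSet v ∩ S = H.neighborSet w ∩ S) :
    Nat.card S + 2 + Nat.card (H.distinguishers v w) ≤ Nat.card α := by
  have hSD := H.disjoint_distinguishers_of_neighborSet_inter_eq h
  have hpairS : Disjoint S {v, w} := by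
    rw [Set.disjoint_insert_right, Set.disjoint_singleton_right]
    exact ⟨hv, hw⟩
  have hpairD : Disjoint (H.distinguishers v w) {v, w} := by
    rw [Set.disjoint_insert_right, Set.disjoint_singleton_right]
    exact ⟨fun h => h.1 rfl, fun h => h.2.1 rfl⟩
  simp only [Nat.card_coe_set_eq, ← Set.ncard_pair hvw]
  rw [← Set.ncard_union_eq hpairS, ← Set.ncard_union_eq
    (Set.disjoint_union_left.mpr ⟨hSD.symm, hpairD.symm⟩), ← Set.ncard_univ]
  exact Set.ncard_le_ncard (Set.subset_univ _)

theorem natCard_induce_distinguishers (Γ : SimpleGraph β) (K : Set β) (v w : K) :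
    Nat.card ((Γ.induce K).distinguishers v w) =
      Nat.card {u : β | u ∈ K ∧ u ≠ v ∧ u ≠ w ∧ Xor' (Γ.Adj u v) (Γ.Adj u w)} :=
  Nat.card_congr <| (Equiv.subtypeEquivRight fun u => by
      simp only [distinguishers, Set.mem_ofPred_eq, induce_adj, Subtype.coe_ne_coe]).trans
    (Equiv.subtypeSubtypeEquivSubtypeInter (· ∈ K)
      fun u => u ≠ v ∧ u ≠ w ∧ Xor' (Γ.Adj u v) (Γ.Adj u w))

end SimpleGraph

theorem statement9_general {G : Type} [AddCommGroup G] [Fintype G] (Λ : Set G)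
    (K : Set G) (q δ : ℝ)
    (hreas : IsReasonable Λ K q δ)
    (S : Set K) (hS : (1 - q) * (Nat.card K : ℝ) ≤ (Nat.card S : ℝ)) :
    IsSignature ((cayleyGraph G Λ).induce K) S := by
  intro v hv w hw hvw heq
  have hcount : (Nat.card S : ℝ) + 2 +
      Nat.card (((cayleyGraph G Λ).induce K).distinguishers v w) ≤ Nat.card K := by
    exact_mod_cast SimpleGraph.card_add_two_add_card_distinguishers_le _ hv hw hvw heq
  have hsep := hreas.2.1 v w (Subtype.coe_injective.ne hvw)
  rw [← SimpleGraph.natCard_induce_distinguishers] at hsep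
  linarith

/-- If `H` is a `(q, δ)`-reasonable induced subgraph of a Cayley graph
`H̃` on `k ≥ k̃ - (1/4) log k̃` vertices, then every `S ⊆ V(H)` with `|S| ≥ (1-q)k`
is a signature of `H`. -/
theorem statement9 {G : Type} [AddCommGroup G] [Fintype G] (Λ : Set G)
    (K : Set G) (q δ : ℝ) (hq0 : 0 < q) (hq1 : q < 1 / 2) (hδ0 : 0 < δ) (hδ1 : δ < 1)
    (hK : (Fintype.card G : ℝ) - Real.log (Fintype.card G) / 4 ≤ (Nat.card K : ℝ))
    (hreas : IsReasonable Λ K q δ)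
    (S : Set K) (hS : (1 - q) * (Nat.card K : ℝ) ≤ (Nat.card S : ℝ)) :
    IsSignature ((cayleyGraph G Λ).induce K) S :=
  statement9_general Λ K q δ hreas S hS
end

section
/- Let H be a graph on k vertices and let m ≥ 2 be an integer. Then (k/(m−1))·emb(H,m−1) ≤ emb(H,m) − emb(H,m−1) ≤ (k/m)·emb(H,m). -/
universe u v

open Filter

/-!
Double counting over the vertices `v` of an extremal `m`-vertex graph `Γ`: an embedding of `H`
hits exactly `k` of the `m` vertices. Summing over `v` the embeddings avoiding `v`, which are
embeddings into the `(m - 1)`-vertex graph `Γ - v`, gives `(m - k) emb(H, Γ) ≤ m emb(H, m - 1)`.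
Conversely, in an `(m - 1)`-vertex graph some vertex `v` is hit by at least a `k/(m - 1)`
fraction of the embeddings; adding a non-adjacent twin `v'` of `v`, each of these embeddings
yields a new one by rerouting `v` to `v'`, so `emb(H, m) ≥ (1 + k/(m - 1)) emb(H, m - 1)`.
-/

open Finset

theorem Finset.sum_card_filter_exists_apply_eq {F α β : Type*} [FunLike F α β]
    [EmbeddingLike F α β] [Fintype α] [Fintype β] [DecidableEq β] (s : Finset F) :
    ∑ b, #{f ∈ s | ∃ a, f a = b} = Fintype.card α * #s := by
  have h := sum_card_bipartiteAbove_eq_sum_card_bipartiteBelow (s := s) (t := univ)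
    (r := fun (f : F) b => ∃ a, f a = b)
  simp only [bipartiteAbove, bipartiteBelow] at h
  rw [← h, sum_const_nat fun f _ => ?_, mul_comm]
  rw [← card_univ, ← card_image_of_injective _ (EmbeddingLike.injective f)]
  congr 1
  ext b
  simp

namespace SimpleGraph

def Embedding.toComapOfLeftInverse {V W : Type*} (G : SimpleGraph V) {g : W → V} {ι : V → W}
    (h : Function.LeftInverse g ι) : G ↪g G.comap g where
  toFun := ι
  inj' := h.injective
  map_rel_iff' {a b} := by simp only [Function.Embedding.coeFn_mk, comap_adj, h a, h b]

/-- `none` is a copy of `v`; it is not adjacent to `some v` because `G` is loopless. -/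
def cloneVertex {V : Type*} (G : SimpleGraph V) (v : V) : SimpleGraph (Option V) :=
  G.comap (Option.getD · v)

end SimpleGraph

open SimpleGraph

section EmbeddingCounts

variable {α β γ : Type} (H : SimpleGraph α)

lemma embCount_congr {Γ : SimpleGraph β} {Γ' : SimpleGraph γ} (e : Γ ≃g Γ') :
    embCount H Γ = embCount H Γ' :=
  Nat.card_congr ((RelIso.refl H.Adj).relEmbeddingCongr e)

lemma bddAbove_embCount [Finite α] (n : ℕ) :
    BddAbove {m | ∃ Γ : SimpleGraph (Fin n), embCount H Γ = m} := by
  refine ⟨Nat.card (α → Fin n), ?_⟩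
  rintro _ ⟨Γ, rfl⟩
  exact Nat.card_le_card_of_injective (fun f : H ↪g Γ => (f : α → Fin n)) DFunLike.coe_injective

lemma embCount_le_embMax [Finite α] [Finite β] (Γ : SimpleGraph β) {n : ℕ}
    (h : Nat.card β = n) : embCount H Γ ≤ embMax H n := by
  have e : β ≃ Fin n := Finite.equivFinOfCardEq h
  exact le_csSup (bddAbove_embCount H n) ⟨Γ.map e.toEmbedding, (embCount_congr H (.map e Γ)).symm⟩

lemma exists_embCount_eq_embMax [Finite α] (n : ℕ) :
    ∃ Γ : SimpleGraph (Fin n), embCount H Γ = embMax H n :=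
  Nat.sSup_mem (s := {m | ∃ Γ : SimpleGraph (Fin n), embCount H Γ = m}) ⟨_, ⊥, rfl⟩
    (bddAbove_embCount H n)

def embeddingsAvoidingEquiv (Γ : SimpleGraph β) (v : β) :
    {f : H ↪g Γ // ∀ i, f i ≠ v} ≃ (H ↪g Γ.induce ({v}ᶜ : Set β)) where
  toFun f :=
    { toFun i := ⟨f.1 i, f.2 i⟩
      inj' _ _ h := f.1.injective (congrArg Subtype.val h)
      map_rel_iff' := f.1.map_rel_iff }
  invFun g := ⟨(Embedding.induce ({v}ᶜ : Set β)).comp g, fun i => (g i).2⟩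
  left_inv _ := rfl
  right_inv _ := rfl

variable [Fintype α] [Fintype β] [DecidableEq β]

lemma card_embeddings_avoiding_le_embMax (Γ : SimpleGraph β) (v : β) :
    #{f : H ↪g Γ | ∀ i, f i ≠ v} ≤ embMax H (Fintype.card β - 1) := by
  rw [← Fintype.card_subtype, ← Nat.card_eq_fintype_card, Nat.card_congr
    (embeddingsAvoidingEquiv H Γ v)]
  refine embCount_le_embMax H _ ?_
  rw [Nat.card_eq_fintype_card, Fintype.card_compl_set, Set.card_singleton]

lemma card_mul_embCount_le_card_mul_embMax_pred_add (Γ : SimpleGraph β) :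
    Fintype.card β * embCount H Γ ≤
      Fintype.card β * embMax H (Fintype.card β - 1) + Fintype.card α * embCount H Γ := by
  have split (v : β) : #{f : H ↪g Γ | ∀ i, f i ≠ v} + #{f : H ↪g Γ | ∃ i, f i = v} =
      embCount H Γ := by
    simp only [← not_exists, Nat.card_eq_fintype_card, embCount]
    rw [add_comm, card_filter_add_card_filter_not, card_univ]
  calc Fintype.card β * embCount H Γ
      = ∑ v, #{f : H ↪g Γ | ∀ i, f i ≠ v} + ∑ v, #{f : H ↪g Γ | ∃ i, f i = v} := by
        simp only [← sum_add_distrib, split, sum_const, card_univ, smul_eq_mul]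
    _ ≤ ∑ _v : β, embMax H (Fintype.card β - 1) + Fintype.card α * embCount H Γ := by
        rw [sum_card_filter_exists_apply_eq, card_univ, embCount, Nat.card_eq_fintype_card]
        gcongr with v
        exact card_embeddings_avoiding_le_embMax H Γ v
    _ = _ := by rw [sum_const, card_univ, smul_eq_mul]

lemma embCount_add_card_embeddings_hitting_le (Γ : SimpleGraph β) (v : β) :
    embCount H Γ + #{f : H ↪g Γ | ∃ i, f i = v} ≤ embCount H (Γ.cloneVertex v) := by
  let keep : Γ ↪g Γ.cloneVertex v := Embedding.toComapOfLeftInverse Γ (ι := some) fun _ => rfl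
  let reroute : Γ ↪g Γ.cloneVertex v :=
    Embedding.toComapOfLeftInverse Γ (ι := fun b => if b = v then none else some b)
      fun b => by by_cases hb : b = v <;> simp [hb]
  have hreroute (b : β) : reroute b = none ↔ b = v := by
    change (if b = v then none else some b) = none ↔ b = v
    split_ifs with hb <;> simp [hb]
  rw [← Fintype.card_subtype, embCount, embCount, Nat.card_eq_fintype_card,
    Nat.card_eq_fintype_card, ← Fintype.card_sum]
  refine Fintype.card_le_of_injective
    (Sum.elim keep.comp fun f => reroute.comp f.1) ?_
  rintro (f | ⟨f, i, hi⟩) (g | ⟨g, j, hj⟩) hfg <;> simp only [Sum.elim_inl, Sum.elim_inr] at hfg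
  · exact congrArg Sum.inl (RelEmbedding.ext fun i => keep.injective (DFunLike.congr_fun hfg i))
  · have : some (f j) = reroute (g j) := DFunLike.congr_fun hfg j
    exact absurd (this.trans ((hreroute _).2 hj)) (Option.some_ne_none _)
  · have : reroute (f i) = some (g i) := DFunLike.congr_fun hfg i
    exact absurd (((hreroute _).2 hi).symm.trans this) (Option.some_ne_none _).symm
  · exact congrArg Sum.inr (Subtype.ext
      (RelEmbedding.ext fun i => reroute.injective (DFunLike.congr_fun hfg i)))

lemma card_add_mul_embCount_le_card_mul_embMax_succ [Nonempty β] (Γ : SimpleGraph β) :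
    (Fintype.card β + Fintype.card α) * embCount H Γ ≤
      Fintype.card β * embMax H (Fintype.card β + 1) := by
  set hits : β → ℕ := fun v => #{f : H ↪g Γ | ∃ i, f i = v}
  obtain ⟨v, -, hv⟩ := exists_max_image univ hits univ_nonempty
  have hsum : Fintype.card α * embCount H Γ ≤ Fintype.card β * hits v := by
    calc Fintype.card α * embCount H Γ = ∑ w, hits w := by
          rw [sum_card_filter_exists_apply_eq, card_univ, embCount, Nat.card_eq_fintype_card]
      _ ≤ ∑ _w : β, hits v := sum_le_sum fun w _ => hv w (mem_univ w)
      _ = Fintype.card β * hits v := by rw [sum_const, card_univ, smul_eq_mul]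
  have hclone : embCount H (Γ.cloneVertex v) ≤ embMax H (Fintype.card β + 1) :=
    embCount_le_embMax H _ (by rw [Nat.card_eq_fintype_card, Fintype.card_option])
  calc (Fintype.card β + Fintype.card α) * embCount H Γ
      ≤ Fintype.card β * (embCount H Γ + hits v) := by rw [add_mul, mul_add]; gcongr
    _ ≤ Fintype.card β * embMax H (Fintype.card β + 1) := by
        gcongr
        exact (embCount_add_card_embeddings_hitting_le H Γ v).trans hclone

end EmbeddingCounts

/-- For a `k`-vertex graph `H` and `m ≥ 2`:
`(k/(m-1)) emb(H, m-1) ≤ emb(H, m) - emb(H, m-1) ≤ (k/m) emb(H, m)`. -/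
theorem statement19 {α : Type} [Finite α] (H : SimpleGraph α) (k : ℕ)
    (hk : Nat.card α = k) (m : ℕ) (hm : 2 ≤ m) :
    (k : ℝ) / ((m : ℝ) - 1) * (embMax H (m - 1) : ℝ) ≤
        (embMax H m : ℝ) - (embMax H (m - 1) : ℝ) ∧
      (embMax H m : ℝ) - (embMax H (m - 1) : ℝ) ≤ (k : ℝ) / (m : ℝ) * (embMax H m : ℝ) := by
  have := Fintype.ofFinite α
  rw [Nat.card_eq_fintype_card] at hk
  obtain ⟨n, rfl⟩ : ∃ n, m = n + 1 := ⟨m - 1, by omega⟩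
  have : NeZero n := ⟨by omega⟩
  obtain ⟨Γ₀, hΓ₀⟩ := exists_embCount_eq_embMax H n
  obtain ⟨Γ₁, hΓ₁⟩ := exists_embCount_eq_embMax H (n + 1)
  have lower := card_add_mul_embCount_le_card_mul_embMax_succ H Γ₀
  have upper := card_mul_embCount_le_card_mul_embMax_pred_add H Γ₁
  simp only [Fintype.card_fin, hk, hΓ₀, hΓ₁, Nat.add_sub_cancel] at lower upper ⊢
  have hn : (0 : ℝ) < n := by exact_mod_cast Nat.pos_of_neZero n
  push_cast
  rw [add_sub_cancel_right, div_mul_eq_mul_div, div_mul_eq_mul_div, div_le_iff₀ hn,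
    le_div_iff₀ (by positivity)]
  constructor
  · have : ((n + k) * embMax H n : ℝ) ≤ n * embMax H (n + 1) := by exact_mod_cast lower
    linarith
  · have : ((n + 1) * embMax H (n + 1) : ℝ) ≤ (n + 1) * embMax H n + k * embMax H (n + 1) := by
      exact_mod_cast upper
    linarith
end
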